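/- arXiv:2403.17548 — 4 statements merged into one kernel-verified Lean document; each statement's English description precedes it below -/
import Mathlib

section
/- Let C be a complete code with |C| = m. Then C is isomorphic as a neural code to C_m = {∅, {1}, {1,2}, ..., {1,2,...,m-1}}. In particular, there exists an order isomorphism between (C, ⊆) and the chain ∅ ⊊ {1} ⊊ ... ⊊ {1,...,m-1}. -/
/-- The codeword containment graph of a neural code `C`: vertices are the codewords,
with an edge between distinct codewords iff one strictly contains the other. -/
def CCG {α : Type*} (C : Set (Finset α)) : SimpleGraph C where
  Adj σ τ := σ.1 ⊂ τ.1 ∨ τ.1 ⊂ σ.1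
  symm := ⟨fun _ _ h => h.symm⟩
  loopless := ⟨fun σ h => by
    rcases h with h | h <;> exact (ssubset_irrefl _ h)⟩


/-- The trunk of `σ` in the code `C`. -/
def Trunk {α : Type*} (C : Set (Finset α)) (σ : Finset α) : Set (Finset α) :=
  {c ∈ C | σ ⊆ c}

/-- A subset of a code is a trunk if it is empty or equal to `Trunk C σ` for some `σ`. -/
def IsTrunk {α : Type*} (C : Set (Finset α)) (T : Set (Finset α)) : Prop :=
  T = ∅ ∨ ∃ σ, T = Trunk C σ

/-- A function `f` (restricted to `C`) is a morphism of codes `C → D` if it maps `C`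
into `D` and the preimage (within `C`) of every trunk of `D` is a trunk of `C`. -/
def IsCodeMorphism {α β : Type*} (C : Set (Finset α)) (D : Set (Finset β))
    (f : Finset α → Finset β) : Prop :=
  Set.MapsTo f C D ∧ ∀ T, IsTrunk D T → IsTrunk C {c ∈ C | f c ∈ T}

/-- The chain code `C_m = {∅, {1}, {1,2}, …, {1,…,m-1}}`. -/
def chainCode (m : ℕ) : Set (Finset ℕ) :=
  {s | ∃ i < m, s = Finset.Icc 1 i}

/-!
A complete code is a finite chain under inclusion, so it is order isomorphic to any other finite
chain of the same size, in particular to `chainCode m`. For codes that are chains, a monotone map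
is already a code morphism: the preimage of a trunk is upward closed, and in a chain an upward
closed set of codewords is the trunk of its least element.
-/

open Set

lemma IsChain.nonempty_orderIso_of_ncard_eq {α β : Type*} [PartialOrder α] [PartialOrder β]
    {s : Set α} {t : Set β} (hs : IsChain (· ≤ ·) s) (ht : IsChain (· ≤ ·) t) (hsfin : s.Finite)
    (htfin : t.Finite) (h : s.ncard = t.ncard) : Nonempty (s ≃o t) := by
  classical
  let _ := hs.linearOrder
  let _ := ht.linearOrder
  let _ := hsfin.fintype
  let _ := htfin.fintype
  have hscard : Fintype.card s = s.ncard := by rw [← Nat.card_eq_fintype_card, Nat.card_coe_set_eq]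
  have htcard : Fintype.card t = s.ncard := by
    rw [← Nat.card_eq_fintype_card, Nat.card_coe_set_eq, h]
  exact ⟨(monoEquivOfFin s hscard).symm.trans (monoEquivOfFin t htcard)⟩

section
variable {α β : Type*} {C : Set (Finset α)} {D : Set (Finset β)}

lemma isChain_of_ssubset_or_ssubset (h : ∀ σ ∈ C, ∀ τ ∈ C, σ ≠ τ → σ ⊂ τ ∨ τ ⊂ σ) :
    IsChain (· ≤ ·) C :=
  fun σ hσ τ hτ hne => (h σ hσ τ hτ hne).imp (·.subset) (·.subset)

lemma IsChain.isTrunk_of_upwardClosed (hC : IsChain (· ≤ ·) C) {S : Set (Finset α)}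
    (hS : S ⊆ C) (hup : ∀ c ∈ S, ∀ c' ∈ C, c ⊆ c' → c' ∈ S) : IsTrunk C S := by
  rcases S.eq_empty_or_nonempty with hempty | hne
  · exact Or.inl hempty
  obtain ⟨s₀, hs₀, hmin⟩ := exists_minimal_of_wellFoundedLT (· ∈ S) hne
  refine Or.inr ⟨s₀, ext fun c => ⟨fun hc => ⟨hS hc, ?_⟩, fun hc => hup s₀ hs₀ c hc.1 hc.2⟩⟩
  exact (hC.total (hS hs₀) (hS hc)).elim id (hmin hc)

lemma IsChain.isCodeMorphism_of_monotoneOn (hC : IsChain (· ≤ ·) C) {f : Finset α → Finset β}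
    (hmaps : MapsTo f C D) (hmono : MonotoneOn f C) : IsCodeMorphism C D f := by
  refine ⟨hmaps, ?_⟩
  rintro T (rfl | ⟨σ, rfl⟩)
  · exact Or.inl (by simp)
  · refine hC.isTrunk_of_upwardClosed (fun c hc => hc.1) ?_
    rintro c ⟨hc, -, hσ⟩ c' hc' hcc'
    exact ⟨hc', hmaps hc', hσ.trans (hmono hc hc' hcc')⟩

/-- Code morphisms are maps on all of `Finset α`; outside `C` the value is irrelevant. -/
noncomputable def extendByEmpty (e : C → D) : Finset α → Finset β :=
  Function.extend Subtype.val (fun c => (e c : Finset β)) fun _ => ∅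

lemma extendByEmpty_apply (e : C → D) (c : C) : extendByEmpty e c = e c :=
  Subtype.val_injective.extend_apply _ _ c

lemma mapsTo_extendByEmpty (e : C → D) : MapsTo (extendByEmpty e) C D := fun c hc => by
  rw [extendByEmpty_apply e ⟨c, hc⟩]
  exact (e _).2

lemma monotoneOn_extendByEmpty {e : C → D} (he : Monotone e) :
    MonotoneOn (extendByEmpty e) C := fun c hc c' hc' hcc' => by
  rw [extendByEmpty_apply e ⟨c, hc⟩, extendByEmpty_apply e ⟨c', hc'⟩]
  exact he hcc'

lemma extendByEmpty_symm_extendByEmpty (e : C ≃ D) {c : Finset α} (hc : c ∈ C) :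
    extendByEmpty e.symm (extendByEmpty e c) = c := by
  rw [extendByEmpty_apply e ⟨c, hc⟩, extendByEmpty_apply e.symm, e.symm_apply_apply]

theorem IsChain.exists_codeIso_of_ncard_eq (hC : IsChain (· ≤ ·) C) (hD : IsChain (· ≤ ·) D)
    (hCfin : C.Finite) (hDfin : D.Finite) (h : C.ncard = D.ncard) :
    (∃ (f : Finset α → Finset β) (g : Finset β → Finset α),
        IsCodeMorphism C D f ∧ IsCodeMorphism D C g ∧
        (∀ c ∈ C, g (f c) = c) ∧ (∀ d ∈ D, f (g d) = d)) ∧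
    Nonempty (C ≃o D) := by
  obtain ⟨e⟩ := hC.nonempty_orderIso_of_ncard_eq hD hCfin hDfin h
  refine ⟨⟨extendByEmpty e, extendByEmpty e.symm, ?_, ?_,
    fun c hc => extendByEmpty_symm_extendByEmpty e.toEquiv hc,
    fun d hd => extendByEmpty_symm_extendByEmpty e.symm.toEquiv hd⟩, ⟨e⟩⟩
  · exact hC.isCodeMorphism_of_monotoneOn (mapsTo_extendByEmpty e)
      (monotoneOn_extendByEmpty e.monotone)
  · exact hD.isCodeMorphism_of_monotoneOn (mapsTo_extendByEmpty e.symm)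
      (monotoneOn_extendByEmpty e.symm.monotone)

end

lemma chainCode_eq_image (m : ℕ) : chainCode m = (Finset.Icc 1 ·) '' Iio m := by
  ext s
  simp [chainCode, eq_comm]

lemma strictMono_Icc_one : StrictMono (Finset.Icc 1 : ℕ → Finset ℕ) := fun _ _ h =>
  Finset.Icc_ssubset_Icc_right (Nat.one_le_of_lt h) le_rfl h

lemma isChain_chainCode (m : ℕ) : IsChain (· ≤ ·) (chainCode m) :=
  (strictMono_Icc_one.monotone.isChain_range).mono (chainCode_eq_image m ▸ image_subset_range _ _)

lemma finite_chainCode (m : ℕ) : (chainCode m).Finite :=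
  chainCode_eq_image m ▸ (finite_Iio m).image _

lemma ncard_chainCode (m : ℕ) : (chainCode m).ncard = m := by
  rw [chainCode_eq_image, ncard_image_of_injective _ strictMono_Icc_one.injective, ncard_Iio_nat]

theorem complete_code_iso_chain_general
    (n m : ℕ) (C : Set (Finset (Fin n)))
    (hcomp : ∀ σ ∈ C, ∀ τ ∈ C, σ ≠ τ → σ ⊂ τ ∨ τ ⊂ σ)
    (hcard : C.ncard = m) :
    (∃ (f : Finset (Fin n) → Finset ℕ) (g : Finset ℕ → Finset (Fin n)),
        IsCodeMorphism C (chainCode m) f ∧ IsCodeMorphism (chainCode m) C g ∧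
        (∀ c ∈ C, g (f c) = c) ∧ (∀ d ∈ chainCode m, f (g d) = d)) ∧
    Nonempty (C ≃o (chainCode m : Set (Finset ℕ))) :=
  (isChain_of_ssubset_or_ssubset hcomp).exists_codeIso_of_ncard_eq (isChain_chainCode m) C.toFinite
    (finite_chainCode m) (by rw [hcard, ncard_chainCode])

theorem complete_code_iso_chain
    (n m : ℕ) (C : Set (Finset (Fin n)))
    (hcomp : ∀ σ ∈ C, ∀ τ ∈ C, σ ≠ τ → σ ⊂ τ ∨ τ ⊂ σ)
    (hcard : C.ncard = m) (hfin : C.Finite) :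
    (∃ (f : Finset (Fin n) → Finset ℕ) (g : Finset ℕ → Finset (Fin n)),
        IsCodeMorphism C (chainCode m) f ∧ IsCodeMorphism (chainCode m) C g ∧
        (∀ c ∈ C, g (f c) = c) ∧ (∀ d ∈ chainCode m, f (g d) = d)) ∧
    Nonempty (C ≃o (chainCode m : Set (Finset ℕ))) :=
  complete_code_iso_chain_general n m C hcomp hcard
end

section
/- Let C be a neural code with |C| = m > 3 whose codeword containment graph is connected and 2-regular (every vertex has degree exactly 2). Then m is even. -/
/-!
Call a neighbour of a codeword `v` an upper neighbour if it strictly contains `v`. If `v` had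
an upper and a lower neighbour, the three would form a triangle, which in a connected 2-regular
graph is the whole graph. So when `m > 3` every codeword has `0` or `2` upper neighbours. Every
edge is counted once as an upper neighbour of its smaller end, and a 2-regular graph on `m`
vertices has `m` edges, so `m` is a sum of even numbers.
-/

open Finset SimpleGraph

namespace SimpleGraph

variable {V : Type*} {G : SimpleGraph V}

theorem Reachable.mem_of_forall_adj_mem {s : Set V} {u v : V} (h : G.Reachable u v)
    (hs : ∀ ⦃a b⦄, G.Adj a b → a ∈ s → b ∈ s) (hu : u ∈ s) : v ∈ s := by
  obtain ⟨p⟩ := h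
  induction p with
  | nil => exact hu
  | cons hadj _ ih => exact ih (hs hadj hu)

variable [Fintype V] [DecidableEq V] [DecidableRel G.Adj]

theorem IsRegularOfDegree.neighborFinset_eq_pair (hreg : G.IsRegularOfDegree 2) {a b c : V}
    (hab : G.Adj a b) (hac : G.Adj a c) (hbc : G.Adj b c) : G.neighborFinset a = {b, c} :=
  (eq_of_subset_of_card_le (by simp [insert_subset_iff, hab, hac])
    (by rw [card_neighborFinset_eq_degree, hreg.degree_eq, card_pair hbc.ne])).symm

/-- A triangle in a 2-regular graph is a whole connected component. -/
theorem Connected.card_le_three_of_isRegularOfDegree_two (hconn : G.Connected)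
    (hreg : G.IsRegularOfDegree 2) {a b c : V} (hab : G.Adj a b) (hac : G.Adj a c)
    (hbc : G.Adj b c) : Fintype.card V ≤ 3 := by
  have hclosed : ∀ x ∈ ({a, b, c} : Finset V), G.neighborFinset x ⊆ {a, b, c} := by
    simp only [mem_insert, mem_singleton, forall_eq_or_imp, forall_eq]
    refine ⟨?_, ?_, ?_⟩
    · rw [hreg.neighborFinset_eq_pair hab hac hbc]
      grind
    · rw [hreg.neighborFinset_eq_pair hab.symm hbc hac]
      grind
    · rw [hreg.neighborFinset_eq_pair hac.symm hbc.symm hab]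
      grind
  have hall : univ ⊆ ({a, b, c} : Finset V) := fun v _ =>
    (hconn.preconnected a v).mem_of_forall_adj_mem (s := ↑({a, b, c} : Finset V))
      (fun x y hxy hx => hclosed x hx ((mem_neighborFinset G x y).2 hxy)) (by simp)
  exact (card_le_card hall).trans card_le_three

end SimpleGraph

namespace CCG

variable {α : Type*} [DecidableEq α] {C : Set (Finset α)}

instance : DecidableRel (CCG C).Adj := fun σ τ =>
  inferInstanceAs (Decidable (σ.1 ⊂ τ.1 ∨ τ.1 ⊂ σ.1))

variable [Fintype C]

theorem degree_eq (v : C) :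
    (CCG C).degree v = #{w : C | v.1 ⊂ w.1} + #{w : C | w.1 ⊂ v.1} := by
  rw [← card_neighborFinset_eq_degree, neighborFinset_eq_filter, ← card_union_of_disjoint]
  · congr 1
    ext w
    simp [CCG]
  · exact disjoint_filter.2 fun w _ hvw hwv => ssubset_asymm hvw hwv

theorem sum_card_ssuperset_eq_card (hreg : (CCG C).IsRegularOfDegree 2) :
    ∑ v : C, #{w : C | v.1 ⊂ w.1} = Fintype.card C := by
  have hsum : ∑ v : C, #{w : C | v.1 ⊂ w.1} = ∑ v : C, #{w : C | w.1 ⊂ v.1} :=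
    sum_card_bipartiteAbove_eq_sum_card_bipartiteBelow (fun v w : C => v.1 ⊂ w.1)
  have htotal : ∑ v : C, (#{w : C | v.1 ⊂ w.1} + #{w : C | w.1 ⊂ v.1}) = 2 * Fintype.card C := by
    simp_rw [← degree_eq, hreg.degree_eq, sum_const, card_univ, smul_eq_mul, mul_comm]
  rw [sum_add_distrib, ← hsum] at htotal
  omega

end CCG

theorem even_card_of_connected_two_regular_ccg
    (n m : ℕ) (C : Set (Finset (Fin n))) (hfin : C.Finite)
    (hcard : C.ncard = m) (hm : 3 < m)
    (hconn : (CCG C).Connected)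
    (hreg : ∀ v : C, ((CCG C).neighborSet v).ncard = 2) :
    Even m := by
  have := hfin.fintype
  have hcardC : Fintype.card C = m := by
    rw [← hcard, ← Nat.card_coe_set_eq, Nat.card_eq_fintype_card]
  have hreg2 : (CCG C).IsRegularOfDegree 2 := fun v => by
    rw [← card_neighborSet_eq_degree, ← Nat.card_eq_fintype_card, Nat.card_coe_set_eq, hreg v]
  have hno_chain : ∀ ρ v τ : C, ρ.1 ⊂ v.1 → v.1 ⊂ τ.1 → False := fun ρ v τ hρv hvτ =>
    absurd (hconn.card_le_three_of_isRegularOfDegree_two hreg2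
      (Or.inl hρv : (CCG C).Adj ρ v) (Or.inl (hρv.trans hvτ)) (Or.inl hvτ)) (by omega)
  have heven : ∀ v : C, Even #{w : C | v.1 ⊂ w.1} := by
    intro v
    have hdeg := (CCG.degree_eq v).symm.trans (hreg2.degree_eq v)
    obtain hup | hdown : #{w : C | v.1 ⊂ w.1} = 0 ∨ #{w : C | w.1 ⊂ v.1} = 0 := by
      by_contra! h
      obtain ⟨τ, hτ⟩ := card_pos.1 (Nat.pos_of_ne_zero h.1)
      obtain ⟨ρ, hρ⟩ := card_pos.1 (Nat.pos_of_ne_zero h.2)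
      exact hno_chain ρ v τ (mem_filter.1 hρ).2 (mem_filter.1 hτ).2
    · exact hup ▸ Even.zero
    · exact ⟨1, by omega⟩
  rw [← hcardC, ← CCG.sum_card_ssuperset_eq_card hreg2]
  exact sum_induction _ Even (fun _ _ => Even.add) Even.zero fun v _ => heven v
end

section
/- For every k ≥ 3, the code CR_k = {{1},...,{k},{1,2},{2,3},...,{k-1,k},{k,1}} is closed convex realizable in ℝ²: there exist nonempty closed convex sets U_1,...,U_k ⊆ ℝ² (the edges of a regular k-gon, U_i being the edge from vertex i to vertex i+1 mod k) with stimulus space X = ⋃ U_i such that CR_k = C(U). -/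
/-!
Any convex `k`-gon realizes `CR_k` by its edges; we take the vertices `(m, m²)`, `m = 1, …, k`,
on a parabola, which makes every computation polynomial. The line through an edge supports the
polygon: its affine form is nonnegative at all vertices and vanishes exactly at the two endpoints
of the edge. Hence a point lying on two distinct edges is a vertex (for `k ≥ 3` the two
endpoints of an edge never both lie on another edge), the vertex `i + 1` lies exactly on the
edges `i` and `i + 1`, and the midpoint of an edge, which lies strictly above the parabola,
lies on that edge alone.
-/

/-- The code `CR_k` on `k` neurons: all singletons `{i}` for `i ∈ [k]` and all
cyclically consecutive pairs `{i, i+1}` (including `{k,1}`). -/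
def cycleCode (k : ℕ) : Set (Finset ℕ) :=
  {s | ∃ i ∈ Finset.Icc 1 k, s = {i}} ∪
  {s | ∃ i ∈ Finset.Icc 1 k, s = {i, i % k + 1}}

/-- The code of a collection `U` indexed by `{1,…,k}` with stimulus space `X`:
`σ` is a codeword iff some point of `X` lies in exactly the sets `U j` with `j ∈ σ`. -/
def codeOfCoverIn (k : ℕ) (U : ℕ → Set (ℝ × ℝ)) (X : Set (ℝ × ℝ)) : Set (Finset ℕ) :=
  {σ | σ ⊆ Finset.Icc 1 k ∧ ∃ x ∈ X, ∀ j ∈ Finset.Icc 1 k, (x ∈ U j ↔ j ∈ σ)}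

open Finset

open scoped Classical in
noncomputable def coverPattern (k : ℕ) (U : ℕ → Set (ℝ × ℝ)) (x : ℝ × ℝ) : Finset ℕ :=
  {j ∈ Icc 1 k | x ∈ U j}

theorem codeOfCoverIn_eq_image (k : ℕ) (U : ℕ → Set (ℝ × ℝ)) (X : Set (ℝ × ℝ)) :
    codeOfCoverIn k U X = coverPattern k U '' X := by
  classical
  ext σ
  constructor
  · rintro ⟨hσ, x, hx, hmem⟩
    refine ⟨x, hx, ?_⟩
    ext j
    simp only [coverPattern, mem_filter]
    exact ⟨fun ⟨hj, hxj⟩ => (hmem j hj).1 hxj, fun hj => ⟨hσ hj, (hmem j (hσ hj)).2 hj⟩⟩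
  · rintro ⟨x, hx, rfl⟩
    exact ⟨filter_subset _ _, x, hx, fun j hj => by simp [coverPattern, hj]⟩

section CyclicSuccessor

variable {k i j : ℕ}

theorem mod_add_one_eq_ite (hi : i ∈ Icc 1 k) : i % k + 1 = if i = k then 1 else i + 1 := by
  rw [mem_Icc] at hi
  split_ifs with h
  · simp [h]
  · rw [Nat.mod_eq_of_lt (by omega)]

theorem mod_add_one_mem_Icc (hi : i ∈ Icc 1 k) : i % k + 1 ∈ Icc 1 k := by
  rw [mod_add_one_eq_ite hi]
  simp only [mem_Icc] at hi ⊢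
  split_ifs <;> omega

theorem mod_add_one_ne_self (hk : 2 ≤ k) (hi : i ∈ Icc 1 k) : i % k + 1 ≠ i := by
  rw [mod_add_one_eq_ite hi]
  split_ifs <;> omega

theorem mod_add_one_mod_add_one_ne_self (hk : 3 ≤ k) (hi : i ∈ Icc 1 k) :
    (i % k + 1) % k + 1 ≠ i := by
  rw [mod_add_one_eq_ite (mod_add_one_mem_Icc hi), mod_add_one_eq_ite hi]
  simp only [mem_Icc] at hi
  split_ifs <;> omega

theorem eq_of_mod_add_one_eq (hi : i ∈ Icc 1 k) (hj : j ∈ Icc 1 k)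
    (h : i % k + 1 = j % k + 1) : i = j := by
  rw [mod_add_one_eq_ite hi, mod_add_one_eq_ite hj] at h
  simp only [mem_Icc] at hi hj
  split_ifs at h <;> omega

theorem exists_mod_add_one_eq (hj : j ∈ Icc 1 k) : ∃ i ∈ Icc 1 k, i % k + 1 = j := by
  simp only [mem_Icc] at hj
  refine ⟨if j = 1 then k else j - 1, ?_, ?_⟩
  · simp only [mem_Icc]
    split_ifs <;> omega
  · rw [mod_add_one_eq_ite (by simp only [mem_Icc]; split_ifs <;> omega)]
    split_ifs <;> omega

end CyclicSuccessor

theorem AffineMap.eq_left_or_eq_right_or_of_mem_segment {E : Type*} [AddCommGroup E]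
    [Module ℝ E] (f : E →ᵃ[ℝ] ℝ) {a b x : E} (hx : x ∈ segment ℝ a b)
    (ha : 0 ≤ f a) (hb : 0 ≤ f b) (hfx : f x = 0) :
    x = a ∨ x = b ∨ (f a = 0 ∧ f b = 0) := by
  obtain ⟨s, t, hs, ht, hst, rfl⟩ := hx
  rw [Convex.combo_affine_apply hst, smul_eq_mul, smul_eq_mul] at hfx
  have hsa : s * f a = 0 := by nlinarith [mul_nonneg hs ha, mul_nonneg ht hb]
  have htb : t * f b = 0 := by nlinarith [mul_nonneg hs ha, mul_nonneg ht hb]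
  rcases mul_eq_zero.1 hsa with rfl | hfa
  · right; left
    simp [show t = 1 by linarith]
  rcases mul_eq_zero.1 htb with rfl | hfb
  · left
    simp [show s = 1 by linarith]
  exact Or.inr (Or.inr ⟨hfa, hfb⟩)

section ParabolicPolygon

variable {k i j m : ℕ} {x : ℝ × ℝ}

def parabolaPt (m : ℕ) : ℝ × ℝ := (m, (m : ℝ) ^ 2)

def polygonEdge (k i : ℕ) : Set (ℝ × ℝ) := segment ℝ (parabolaPt i) (parabolaPt (i % k + 1))

/-- Scaled by `b - a` so that it is nonnegative at every vertex whichever way the edge is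
oriented (the closing edge `k → 1` runs backwards). -/
def chordForm (a b : ℝ) : ℝ × ℝ →ᵃ[ℝ] ℝ where
  toFun x := (b - a) * (x.2 - (a + b) * x.1 + a * b)
  linear := (b - a) • (LinearMap.snd ℝ ℝ ℝ - (a + b) • LinearMap.fst ℝ ℝ ℝ)
  map_vadd' p v := by
    simp only [vadd_eq_add, LinearMap.smul_apply, LinearMap.sub_apply, LinearMap.snd_apply,
      LinearMap.fst_apply, Prod.fst_add, Prod.snd_add, smul_eq_mul]
    ring

theorem chordForm_parabolaPt (a b : ℝ) (m : ℕ) :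
    chordForm a b (parabolaPt m) = (b - a) * ((m - a) * (m - b)) := by
  simp only [chordForm, parabolaPt, AffineMap.coe_mk]
  ring

noncomputable abbrev edgeForm (k i : ℕ) : ℝ × ℝ →ᵃ[ℝ] ℝ := chordForm i (i % k + 1 : ℕ)

theorem edgeForm_parabolaPt_nonneg (hi : i ∈ Icc 1 k) (hm : m ∈ Icc 1 k) :
    0 ≤ edgeForm k i (parabolaPt m) := by
  rw [chordForm_parabolaPt, mod_add_one_eq_ite hi]
  simp only [mem_Icc] at hi hm
  split_ifs with h
  · subst h
    have hm1 : (1 : ℝ) ≤ m := by exact_mod_cast hm.1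
    have hmk : (m : ℝ) ≤ i := by exact_mod_cast hm.2
    push_cast
    nlinarith [mul_nonneg (sub_nonneg.2 hmk) (sub_nonneg.2 hm1)]
  · rcases le_or_gt m i with hmi | hmi
    · have hmi' : (m : ℝ) ≤ i := by exact_mod_cast hmi
      push_cast
      nlinarith
    · have hmi' : (i : ℝ) + 1 ≤ m := by exact_mod_cast hmi
      push_cast
      nlinarith

theorem edgeForm_parabolaPt_eq_zero_iff (hk : 2 ≤ k) (hi : i ∈ Icc 1 k) :
    edgeForm k i (parabolaPt m) = 0 ↔ m = i ∨ m = i % k + 1 := by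
  have hne : ((i % k + 1 : ℕ) - i : ℝ) ≠ 0 :=
    sub_ne_zero.2 (by exact_mod_cast mod_add_one_ne_self hk hi)
  simp only [chordForm_parabolaPt, mul_eq_zero, hne, sub_eq_zero, Nat.cast_inj, false_or]

theorem edgeForm_eq_zero_of_mem (hx : x ∈ polygonEdge k i) : edgeForm k i x = 0 := by
  have hseg := image_segment ℝ (edgeForm k i) (parabolaPt i) (parabolaPt (i % k + 1))
  simp only [chordForm_parabolaPt, sub_self, zero_mul, mul_zero, segment_same] at hseg
  exact hseg.subset (Set.mem_image_of_mem _ hx)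

theorem parabolaPt_mem_polygonEdge_iff (hk : 2 ≤ k) (hi : i ∈ Icc 1 k) :
    parabolaPt m ∈ polygonEdge k i ↔ m = i ∨ m = i % k + 1 := by
  refine ⟨fun h => (edgeForm_parabolaPt_eq_zero_iff hk hi).1 (edgeForm_eq_zero_of_mem h), ?_⟩
  rintro (rfl | rfl)
  · exact left_mem_segment ℝ _ _
  · exact right_mem_segment ℝ _ _

theorem midpoint_parabolaPt_ne (h : i ≠ j) (m : ℕ) :
    midpoint ℝ (parabolaPt i) (parabolaPt j) ≠ parabolaPt m := by
  intro hm
  rw [midpoint_eq_smul_add, Prod.ext_iff] at hm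
  simp only [parabolaPt, Prod.smul_fst, Prod.smul_snd, Prod.fst_add, Prod.snd_add,
    smul_eq_mul] at hm
  obtain ⟨hx, hy⟩ := hm
  have hsq : ((i : ℝ) - j) ^ 2 = 0 := by
    rw [← hx] at hy
    norm_num at hy
    nlinarith
  exact h (by exact_mod_cast sub_eq_zero.1 (pow_eq_zero_iff two_ne_zero |>.1 hsq))

theorem exists_eq_parabolaPt_of_mem_polygonEdge_of_ne (hk : 3 ≤ k) (hi : i ∈ Icc 1 k)
    (hj : j ∈ Icc 1 k) (hij : i ≠ j) (hxi : x ∈ polygonEdge k i) (hxj : x ∈ polygonEdge k j) :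
    ∃ m ∈ Icc 1 k, x = parabolaPt m := by
  rcases (edgeForm k i).eq_left_or_eq_right_or_of_mem_segment hxj
    (edgeForm_parabolaPt_nonneg hi hj) (edgeForm_parabolaPt_nonneg hi (mod_add_one_mem_Icc hj))
    (edgeForm_eq_zero_of_mem hxi) with rfl | rfl | ⟨hfj, hfj'⟩
  · exact ⟨j, hj, rfl⟩
  · exact ⟨_, mod_add_one_mem_Icc hj, rfl⟩
  exfalso
  rw [edgeForm_parabolaPt_eq_zero_iff (by omega) hi] at hfj hfj'
  obtain rfl := hfj.resolve_left (Ne.symm hij)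
  rcases hfj' with h | h
  · exact mod_add_one_mod_add_one_ne_self hk hi h
  · exact mod_add_one_ne_self (by omega) (mod_add_one_mem_Icc hi) h

theorem coverPattern_polygonEdge_parabolaPt (hk : 2 ≤ k) (hi : i ∈ Icc 1 k) :
    coverPattern k (polygonEdge k) (parabolaPt (i % k + 1)) = {i, i % k + 1} := by
  ext j
  simp only [coverPattern, mem_filter, mem_insert, mem_singleton]
  constructor
  · rintro ⟨hj, hmem⟩
    rcases (parabolaPt_mem_polygonEdge_iff hk hj).1 hmem with h | h
    · exact Or.inr h.symm
    · exact Or.inl (eq_of_mod_add_one_eq hj hi h.symm)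
  · rintro (rfl | rfl)
    · exact ⟨hi, right_mem_segment ℝ _ _⟩
    · exact ⟨mod_add_one_mem_Icc hi, left_mem_segment ℝ _ _⟩

theorem coverPattern_polygonEdge_of_ne_parabolaPt (hk : 3 ≤ k) (hi : i ∈ Icc 1 k)
    (hx : x ∈ polygonEdge k i) (hv : ∀ m ∈ Icc 1 k, x ≠ parabolaPt m) :
    coverPattern k (polygonEdge k) x = {i} := by
  ext j
  simp only [coverPattern, mem_filter, mem_singleton]
  constructor
  · rintro ⟨hj, hxj⟩
    by_contra hji
    obtain ⟨m, hm, rfl⟩ :=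
      exists_eq_parabolaPt_of_mem_polygonEdge_of_ne hk hi hj (Ne.symm hji) hx hxj
    exact hv m hm rfl
  · rintro rfl
    exact ⟨hi, hx⟩

end ParabolicPolygon

theorem cycleCode_closed_convex_realizable (k : ℕ) (hk : 3 ≤ k) :
    ∃ U : ℕ → Set (ℝ × ℝ),
      (∀ i ∈ Finset.Icc 1 k, (U i).Nonempty ∧ IsClosed (U i) ∧ Convex ℝ (U i)) ∧
      codeOfCoverIn k U (⋃ i ∈ Finset.Icc 1 k, U i) = cycleCode k := by
  refine ⟨polygonEdge k, fun i _ => ⟨⟨_, left_mem_segment ℝ _ _⟩, ?_, convex_segment _ _⟩, ?_⟩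
  · rw [polygonEdge, ← convexHull_pair]
    exact (Set.toFinite _).isClosed_convexHull ℝ
  rw [codeOfCoverIn_eq_image]
  apply Set.Subset.antisymm
  · rintro _ ⟨x, hx, rfl⟩
    obtain ⟨i, hi, hxi⟩ := Set.mem_iUnion₂.1 hx
    by_cases hv : ∃ m ∈ Icc 1 k, x = parabolaPt m
    · obtain ⟨m, hm, rfl⟩ := hv
      obtain ⟨j, hj, rfl⟩ := exists_mod_add_one_eq hm
      exact Or.inr ⟨j, hj, coverPattern_polygonEdge_parabolaPt (by omega) hj⟩
    · push Not at hv
      exact Or.inl ⟨i, hi, coverPattern_polygonEdge_of_ne_parabolaPt hk hi hxi hv⟩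
  · rintro σ (⟨i, hi, rfl⟩ | ⟨i, hi, rfl⟩)
    · refine ⟨_, Set.mem_iUnion₂.2 ⟨i, hi, midpoint_mem_segment _ _⟩,
        coverPattern_polygonEdge_of_ne_parabolaPt hk hi (midpoint_mem_segment _ _) fun m _ => ?_⟩
      exact midpoint_parabolaPt_ne (mod_add_one_ne_self (by omega) hi).symm m
    · exact ⟨_, Set.mem_iUnion₂.2 ⟨i, hi, right_mem_segment ℝ _ _⟩,
        coverPattern_polygonEdge_parabolaPt (by omega) hi⟩
end

section
/- Let C be a code on n neurons and D the code on n-1 neurons obtained by deleting the n-th neuron from every codeword (D = {c \ {n} : c ∈ C}). Then CF(D) = {α ∈ CF(C) : x_n does not divide α and (1-x_n) does not divide α}. -/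
open MvPolynomial

/-- `ρ_v = ∏_{i ∈ v} x_i ∏_{j ∈ [n] \ v} (1 - x_j)` in `F₂[x_1,…,x_n]`
(variables indexed by `{1,…,n} ⊆ ℕ`). -/
noncomputable def rho (n : ℕ) (v : Finset ℕ) : MvPolynomial ℕ (ZMod 2) :=
  ∏ i ∈ Finset.Icc 1 n, if i ∈ v then X i else (1 - X i)

/-- The neural ideal `J_C = ⟨ρ_v : v ⊆ [n], v ∉ C⟩` of a code `C` on `n` neurons. -/
noncomputable def neuralIdeal (n : ℕ) (C : Set (Finset ℕ)) : Ideal (MvPolynomial ℕ (ZMod 2)) :=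
  Ideal.span {p | ∃ v : Finset ℕ, v ⊆ Finset.Icc 1 n ∧ v ∉ C ∧ p = rho n v}

/-- A pseudo-monomial: `∏_{i ∈ σ} x_i ∏_{j ∈ τ} (1 - x_j)` with `σ ∩ τ = ∅`. -/
def IsPseudoMonomial (f : MvPolynomial ℕ (ZMod 2)) : Prop :=
  ∃ σ τ : Finset ℕ, Disjoint σ τ ∧
    f = (∏ i ∈ σ, X i) * ∏ j ∈ τ, (1 - X j)

/-- `f` is a minimal pseudo-monomial of the ideal `J`: a pseudo-monomial in `J` such
that no pseudo-monomial `g ∈ J` of strictly smaller degree satisfies `f = h * g`. -/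
def IsMinimalPseudoMonomial (J : Ideal (MvPolynomial ℕ (ZMod 2)))
    (f : MvPolynomial ℕ (ZMod 2)) : Prop :=
  IsPseudoMonomial f ∧ f ∈ J ∧
    ¬ ∃ g, IsPseudoMonomial g ∧ g ∈ J ∧ g.totalDegree < f.totalDegree ∧
      ∃ h, f = h * g

/-- The canonical form `CF(C)`: the set of all minimal pseudo-monomials of `J_C`. -/
noncomputable def CF (n : ℕ) (C : Set (Finset ℕ)) : Set (MvPolynomial ℕ (ZMod 2)) :=
  {f | IsMinimalPseudoMonomial (neuralIdeal n C) f}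

/-! ### Auxiliary definitions and lemmas -/

/-- Abbreviation for the pseudo-monomial with positive part `σ` and negative part `τ`. -/
noncomputable def pm (σ τ : Finset ℕ) : MvPolynomial ℕ (ZMod 2) :=
  (∏ i ∈ σ, X i) * ∏ j ∈ τ, (1 - X j)

lemma isPseudoMonomial_iff {f : MvPolynomial ℕ (ZMod 2)} :
    IsPseudoMonomial f ↔ ∃ σ τ : Finset ℕ, Disjoint σ τ ∧ f = pm σ τ := Iff.rfl

/-- Indicator evaluation point of a finite set. -/
def ind (c : Finset ℕ) : ℕ → ZMod 2 := fun i => if i ∈ c then 1 else 0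

lemma eval_pm (z : ℕ → ZMod 2) (σ τ : Finset ℕ) :
    eval z (pm σ τ) = (∏ i ∈ σ, z i) * ∏ j ∈ τ, (1 - z j) := by
  simp [pm, eval_prod]

lemma eval_ind_pm {σ τ c : Finset ℕ} (h1 : σ ⊆ c) (h2 : ∀ j ∈ τ, j ∉ c) :
    eval (ind c) (pm σ τ) = 1 := by
  rw [eval_pm]
  have e1 : ∏ i ∈ σ, ind c i = 1 :=
    Finset.prod_eq_one fun i hi => by simp [ind, h1 hi]
  have e2 : ∏ j ∈ τ, (1 - ind c j) = 1 :=
    Finset.prod_eq_one fun j hj => by simp [ind, h2 j hj]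
  rw [e1, e2, one_mul]

lemma pm_ne_zero {σ τ : Finset ℕ} (hd : Disjoint σ τ) : pm σ τ ≠ 0 := by
  intro h
  have h1 : eval (ind σ) (pm σ τ) = 1 :=
    eval_ind_pm le_rfl (fun j hj => Finset.disjoint_right.mp hd hj)
  rw [h, map_zero] at h1
  exact zero_ne_one h1

lemma pm_erase_left {n : ℕ} {σ : Finset ℕ} (τ : Finset ℕ) (h : n ∈ σ) :
    pm σ τ = X n * pm (σ.erase n) τ := by
  rw [pm, pm, ← Finset.mul_prod_erase σ _ h, mul_assoc]

lemma pm_erase_right {n : ℕ} (σ : Finset ℕ) {τ : Finset ℕ} (h : n ∈ τ) :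
    pm σ τ = (1 - X n) * pm σ (τ.erase n) := by
  rw [pm, pm, ← Finset.mul_prod_erase τ _ h]; ring

lemma mem_of_X_dvd {n : ℕ} {σ τ : Finset ℕ} (hd : Disjoint σ τ)
    (h : X n ∣ pm σ τ) : n ∈ σ := by
  by_contra hn
  obtain ⟨q, hq⟩ := h
  have h1 : eval (ind σ) (pm σ τ) = 1 :=
    eval_ind_pm le_rfl (fun j hj => Finset.disjoint_right.mp hd hj)
  rw [hq, map_mul, eval_X] at h1
  simp [ind, hn] at h1

lemma mem_of_one_sub_X_dvd {n : ℕ} {σ τ : Finset ℕ} (hd : Disjoint σ τ)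
    (h : (1 - X n) ∣ pm σ τ) : n ∈ τ := by
  by_contra hn
  obtain ⟨q, hq⟩ := h
  have h1 : eval (ind (insert n σ)) (pm σ τ) = 1 := by
    refine eval_ind_pm (Finset.subset_insert _ _) ?_
    intro j hj
    simp only [Finset.mem_insert, not_or]
    exact ⟨fun h => hn (h ▸ hj), Finset.disjoint_right.mp hd hj⟩
  rw [hq, map_mul, map_sub, map_one, eval_X] at h1
  simp [ind] at h1

/-- Degree strictly increases when multiplying a nonzero polynomial by `X n`. -/
lemma lt_totalDegree_X_mul (g : MvPolynomial ℕ (ZMod 2)) (hg : g ≠ 0) (n : ℕ) :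
    g.totalDegree < (X n * g).totalDegree := by
  obtain ⟨m, hm, hms⟩ := g.support.exists_mem_eq_sup (support_nonempty.mpr hg)
    (fun s => s.sum fun _ e => e)
  have hc : coeff (Finsupp.single n 1 + m) (X n * g) ≠ 0 := by
    rw [coeff_X_mul]; exact mem_support_iff.mp hm
  have hle := le_totalDegree (mem_support_iff.mpr hc)
  have hsum : ((Finsupp.single n 1 + m).sum fun _ e => e)
      = 1 + (m.sum fun _ e => e) := by
    rw [Finsupp.sum_add_index' (fun _ => rfl) (fun _ _ _ => rfl),
      Finsupp.sum_single_index rfl]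
  rw [hsum] at hle
  rw [totalDegree, hms]
  omega

lemma lt_totalDegree_one_sub_X_mul (g : MvPolynomial ℕ (ZMod 2)) (hg : g ≠ 0) (n : ℕ) :
    g.totalDegree < ((1 - X n) * g).totalDegree := by
  obtain ⟨m, hm, hms⟩ := g.support.exists_mem_eq_sup (support_nonempty.mpr hg)
    (fun s => s.sum fun _ e => e)
  have hgm : g.totalDegree = m.sum fun _ e => e := by rw [totalDegree, hms]
  have hsum : ((Finsupp.single n 1 + m).sum fun _ e => e)
      = 1 + (m.sum fun _ e => e) := by
    rw [Finsupp.sum_add_index' (fun _ => rfl) (fun _ _ _ => rfl),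
      Finsupp.sum_single_index rfl]
  have hz : coeff (Finsupp.single n 1 + m) g = 0 := by
    apply coeff_eq_zero_of_totalDegree_lt
    show g.totalDegree < (Finsupp.single n 1 + m).sum fun _ e => e
    rw [hsum, hgm]; omega
  have hc : coeff (Finsupp.single n 1 + m) ((1 - X n) * g) ≠ 0 := by
    have hexp : (1 - X n) * g = g - X n * g := by ring
    rw [hexp, coeff_sub, hz, coeff_X_mul, zero_sub, neg_ne_zero]
    exact mem_support_iff.mp hm
  have hle := le_totalDegree (mem_support_iff.mpr hc)
  rw [hsum] at hle
  rw [hgm]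
  omega

/-- Compatibility of a pseudo-monomial `(σ, τ)` with a codeword `c` relative to `[n]`. -/
def Compat (n : ℕ) (σ τ c : Finset ℕ) : Prop :=
  σ ∩ Finset.Icc 1 n ⊆ c ∧ Disjoint (τ ∩ Finset.Icc 1 n) c

lemma eval_rho_zero {n : ℕ} {v c : Finset ℕ} (hv : v ⊆ Finset.Icc 1 n)
    (hc : c ⊆ Finset.Icc 1 n) (hne : v ≠ c) (z : Finset ℕ)
    (hz : ∀ i ∈ Finset.Icc 1 n, (i ∈ z ↔ i ∈ c)) :
    eval (ind z) (rho n v) = 0 := by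
  obtain ⟨i, hi⟩ : ∃ i, ¬(i ∈ v ↔ i ∈ c) :=
    not_forall.mp (fun h => hne (Finset.ext_iff.mpr h))
  have hiIcc : i ∈ Finset.Icc 1 n := by
    by_cases h1 : i ∈ v
    · exact hv h1
    · exact hc (by tauto)
  rw [rho, eval_prod]
  refine Finset.prod_eq_zero hiIcc ?_
  by_cases h1 : i ∈ v
  · have h2 : i ∉ c := by tauto
    rw [if_pos h1, eval_X]
    simp [ind, (hz i hiIcc), h2]
  · have h2 : i ∈ c := by tauto
    rw [if_neg h1, map_sub, map_one, eval_X]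
    simp [ind, (hz i hiIcc).mpr h2]

lemma rho_eq (n : ℕ) {t : Finset ℕ} (ht : t ⊆ Finset.Icc 1 n) :
    rho n t = (∏ i ∈ t, X i) * ∏ i ∈ Finset.Icc 1 n \ t, (1 - X i) := by
  rw [rho]
  conv_lhs => rw [show Finset.Icc 1 n = t ∪ (Finset.Icc 1 n \ t) from
    (Finset.union_sdiff_of_subset ht).symm]
  rw [Finset.prod_union (Finset.disjoint_sdiff)]
  congr 1
  · exact Finset.prod_congr rfl fun i hi => if_pos hi
  · exact Finset.prod_congr rfl fun i hi => if_neg (Finset.mem_sdiff.mp hi).2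

lemma pm_eq_sum (n : ℕ) {σ' τ' : Finset ℕ} (hσ : σ' ⊆ Finset.Icc 1 n)
    (hτ : τ' ⊆ Finset.Icc 1 n) (hd : Disjoint σ' τ') :
    pm σ' τ' = ∑ t ∈ (Finset.Icc 1 n).powerset,
      (∏ i ∈ t, if i ∈ τ' then (0 : MvPolynomial ℕ (ZMod 2)) else X i) *
        ∏ i ∈ Finset.Icc 1 n \ t, if i ∈ σ' then (0 : MvPolynomial ℕ (ZMod 2)) else (1 - X i) := by
  rw [← Finset.prod_add]
  have hpt : ∀ i ∈ Finset.Icc 1 n,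
      ((if i ∈ τ' then (0 : MvPolynomial ℕ (ZMod 2)) else X i) + (if i ∈ σ' then 0 else 1 - X i)) =
        (if i ∈ σ' then X i else if i ∈ τ' then (1 - X i) else 1) := by
    intro i _
    by_cases h1 : i ∈ σ'
    · have h2 : i ∉ τ' := Finset.disjoint_left.mp hd h1
      rw [if_neg h2, if_pos h1, if_pos h1, add_zero]
    · by_cases h2 : i ∈ τ'
      · simp only [if_pos h2, if_neg h1, zero_add]
      · simp only [if_neg h1, if_neg h2]; ring
  rw [Finset.prod_congr rfl hpt]
  rw [← Finset.prod_subset (Finset.union_subset hσ hτ)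
    (fun i _ hi => by
      simp only [Finset.mem_union, not_or] at hi
      rw [if_neg hi.1, if_neg hi.2])]
  rw [Finset.prod_union hd, pm]
  congr 1
  · exact (Finset.prod_congr rfl fun i hi => if_pos hi).symm
  · refine (Finset.prod_congr rfl fun i hi => ?_).symm
    rw [if_neg (Finset.disjoint_right.mp hd hi), if_pos hi]

/-- The key membership criterion for pseudo-monomials in a neural ideal. -/
lemma pm_mem_neuralIdeal_iff {n : ℕ} {C : Set (Finset ℕ)}
    (hC : ∀ c ∈ C, c ⊆ Finset.Icc 1 n) {σ τ : Finset ℕ} (hd : Disjoint σ τ) :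
    pm σ τ ∈ neuralIdeal n C ↔ ∀ c ∈ C, ¬ Compat n σ τ c := by
  constructor
  · rintro hmem c hcC ⟨hσc, hτc⟩
    set z := c ∪ (σ \ Finset.Icc 1 n) with hzdef
    have hker : neuralIdeal n C ≤ RingHom.ker (eval (ind z)) := by
      rw [neuralIdeal, Ideal.span_le]
      rintro p ⟨v, hv, hvC, rfl⟩
      rw [SetLike.mem_coe, RingHom.mem_ker]
      refine eval_rho_zero hv (hC c hcC) (fun h => hvC (h ▸ hcC)) z ?_
      intro i hi
      simp only [hzdef, Finset.mem_union, Finset.mem_sdiff]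
      tauto
    have h0 : eval (ind z) (pm σ τ) = 0 := hker hmem
    have h1 : eval (ind z) (pm σ τ) = 1 := by
      refine eval_ind_pm ?_ ?_
      · intro i hi
        by_cases h : i ∈ Finset.Icc 1 n
        · exact Finset.mem_union_left _ (hσc (Finset.mem_inter.mpr ⟨hi, h⟩))
        · exact Finset.mem_union_right _ (Finset.mem_sdiff.mpr ⟨hi, h⟩)
      · intro j hj
        rw [Finset.mem_union, not_or, Finset.mem_sdiff, not_and]
        constructor
        · intro hjc
          exact (Finset.disjoint_left.mp hτc
            (Finset.mem_inter.mpr ⟨hj, hC c hcC hjc⟩)) hjc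
        · intro hjσ
          exact absurd hjσ (Finset.disjoint_right.mp hd hj)
    rw [h0] at h1
    exact zero_ne_one h1
  · intro hcompat
    have split : pm σ τ =
        pm (σ \ Finset.Icc 1 n) (τ \ Finset.Icc 1 n) *
          pm (σ ∩ Finset.Icc 1 n) (τ ∩ Finset.Icc 1 n) := by
      have hA : ∀ (ρ : Finset ℕ) (f : ℕ → MvPolynomial ℕ (ZMod 2)),
          ∏ i ∈ ρ, f i =
            (∏ i ∈ ρ ∩ Finset.Icc 1 n, f i) * ∏ i ∈ ρ \ Finset.Icc 1 n, f i := by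
        intro ρ f
        rw [← Finset.prod_filter_mul_prod_filter_not ρ (· ∈ Finset.Icc 1 n) f,
          Finset.filter_mem_eq_inter, ← Finset.sdiff_eq_filter]
      rw [pm, pm, pm, hA σ, hA τ]
      ring
    rw [split]
    apply Ideal.mul_mem_left
    have hdint : Disjoint (σ ∩ Finset.Icc 1 n) (τ ∩ Finset.Icc 1 n) :=
      Finset.disjoint_of_subset_left Finset.inter_subset_left
        (Finset.disjoint_of_subset_right Finset.inter_subset_left hd)
    rw [pm_eq_sum n Finset.inter_subset_right Finset.inter_subset_right hdint]
    apply Ideal.sum_mem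
    intro t ht
    have hts : t ⊆ Finset.Icc 1 n := Finset.mem_powerset.mp ht
    by_cases hcase : σ ∩ Finset.Icc 1 n ⊆ t ∧ Disjoint (τ ∩ Finset.Icc 1 n) t
    · have htC : t ∉ C := fun h => hcompat t h ⟨hcase.1, hcase.2⟩
      have e1 : ∏ i ∈ t, (if i ∈ τ ∩ Finset.Icc 1 n then (0 : MvPolynomial ℕ (ZMod 2)) else X i)
          = ∏ i ∈ t, X i :=
        Finset.prod_congr rfl fun i hi =>
          if_neg (Finset.disjoint_right.mp hcase.2 hi)
      have e2 : ∏ i ∈ Finset.Icc 1 n \ t,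
            (if i ∈ σ ∩ Finset.Icc 1 n then (0 : MvPolynomial ℕ (ZMod 2)) else (1 - X i))
          = ∏ i ∈ Finset.Icc 1 n \ t, (1 - X i) :=
        Finset.prod_congr rfl fun i hi =>
          if_neg (fun hmem => (Finset.mem_sdiff.mp hi).2 (hcase.1 hmem))
      rw [e1, e2, ← rho_eq n hts]
      exact Ideal.subset_span ⟨t, hts, htC, rfl⟩
    · rw [not_and_or] at hcase
      rcases hcase with h | h
      · obtain ⟨i, hiσ, hit⟩ := Finset.not_subset.mp h
        have hz : ∏ i ∈ Finset.Icc 1 n \ t,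
            (if i ∈ σ ∩ Finset.Icc 1 n then (0 : MvPolynomial ℕ (ZMod 2)) else (1 - X i)) = 0 :=
          Finset.prod_eq_zero
            (Finset.mem_sdiff.mpr ⟨(Finset.mem_inter.mp hiσ).2, hit⟩)
            (if_pos hiσ)
        rw [hz, mul_zero]
        exact Ideal.zero_mem _
      · obtain ⟨i, hiτ, hit⟩ := Finset.not_disjoint_iff.mp h
        have hz : ∏ i ∈ t, (if i ∈ τ ∩ Finset.Icc 1 n then (0 : MvPolynomial ℕ (ZMod 2)) else X i) = 0 :=
          Finset.prod_eq_zero hit (if_pos hiτ)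
        rw [hz, zero_mul]
        exact Ideal.zero_mem _

lemma compat_erase {n : ℕ} (σ τ c : Finset ℕ) :
    Compat (n - 1) σ τ (c.erase n) ↔ Compat (n - 1) σ τ c := by
  have hn : ∀ i ∈ Finset.Icc 1 (n - 1), i ≠ n := by
    intro i hi
    rw [Finset.mem_Icc] at hi
    omega
  constructor
  · rintro ⟨h1, h2⟩
    refine ⟨fun i hi => (Finset.erase_subset n c) (h1 hi), ?_⟩
    rw [Finset.disjoint_left]
    intro i hi hic
    exact Finset.disjoint_left.mp h2 hi
      (Finset.mem_erase.mpr ⟨hn i (Finset.mem_inter.mp hi).2, hic⟩)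
  · rintro ⟨h1, h2⟩
    refine ⟨?_, Finset.disjoint_of_subset_right (Finset.erase_subset n c) h2⟩
    intro i hi
    exact Finset.mem_erase.mpr ⟨hn i (Finset.mem_inter.mp hi).2, h1 hi⟩

lemma compat_pred {n : ℕ} {σ τ : Finset ℕ} (hσ : n ∉ σ) (hτ : n ∉ τ)
    (c : Finset ℕ) : Compat n σ τ c ↔ Compat (n - 1) σ τ c := by
  have hset : ∀ ρ : Finset ℕ, n ∉ ρ →
      ρ ∩ Finset.Icc 1 n = ρ ∩ Finset.Icc 1 (n - 1) := by
    intro ρ hρ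
    ext i
    simp only [Finset.mem_inter, Finset.mem_Icc]
    constructor
    · rintro ⟨h1, h2, h3⟩
      have : i ≠ n := fun h => hρ (h ▸ h1)
      exact ⟨h1, h2, by omega⟩
    · rintro ⟨h1, h2, h3⟩
      exact ⟨h1, h2, by omega⟩
  rw [Compat, Compat, hset σ hσ, hset τ hτ]

lemma compat_mono {n : ℕ} {σ τ c : Finset ℕ} (h : Compat n σ τ c) :
    Compat (n - 1) σ τ c := by
  have hsub : Finset.Icc 1 (n - 1) ⊆ Finset.Icc 1 n := by
    intro i hi
    rw [Finset.mem_Icc] at hi ⊢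
    omega
  exact ⟨fun i hi => h.1 (Finset.mem_inter.mpr
      ⟨(Finset.mem_inter.mp hi).1, hsub (Finset.mem_inter.mp hi).2⟩),
    Finset.disjoint_of_subset_left
      (Finset.inter_subset_inter Finset.Subset.rfl hsub) h.2⟩

lemma erase_inter {n : ℕ} (ρ : Finset ℕ) :
    (ρ.erase n) ∩ Finset.Icc 1 (n - 1) = ρ ∩ Finset.Icc 1 (n - 1) := by
  ext i
  simp only [Finset.mem_inter, Finset.mem_erase, Finset.mem_Icc]
  constructor
  · rintro ⟨⟨_, h1⟩, h2⟩
    exact ⟨h1, h2⟩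
  · rintro ⟨h1, h2, h3⟩
    exact ⟨⟨by omega, h1⟩, h2, h3⟩

/-- Membership criterion in the projected neural ideal. -/
lemma pm_mem_projected_iff {n : ℕ} {C : Set (Finset ℕ)}
    (hC : ∀ c ∈ C, c ⊆ Finset.Icc 1 n) {σ τ : Finset ℕ} (hd : Disjoint σ τ) :
    pm σ τ ∈ neuralIdeal (n - 1) {d | ∃ c ∈ C, d = c.erase n} ↔
      ∀ c ∈ C, ¬ Compat (n - 1) σ τ c := by
  have hD : ∀ d ∈ {d | ∃ c ∈ C, d = c.erase n}, d ⊆ Finset.Icc 1 (n - 1) := by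
    rintro d ⟨c, hc, rfl⟩ i hi
    obtain ⟨hne, hic⟩ := Finset.mem_erase.mp hi
    have := Finset.mem_Icc.mp (hC c hc hic)
    rw [Finset.mem_Icc]
    omega
  rw [pm_mem_neuralIdeal_iff hD hd]
  constructor
  · intro h c hc hcompat
    exact h _ ⟨c, hc, rfl⟩ ((compat_erase σ τ c).mpr hcompat)
  · rintro h d ⟨c, hc, rfl⟩ hcompat
    exact h c hc ((compat_erase σ τ c).mp hcompat)

theorem cf_projection
    (n : ℕ) (C : Set (Finset ℕ)) (hC : ∀ c ∈ C, c ⊆ Finset.Icc 1 n) :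
    CF (n - 1) {d | ∃ c ∈ C, d = c.erase n} =
      {α ∈ CF n C | ¬ (X n ∣ α) ∧ ¬ ((1 - X n) ∣ α)} := by
  ext f
  constructor
  · rintro ⟨⟨σ, τ, hd, hfeq⟩, hmem, hmin⟩
    change f = pm σ τ at hfeq
    subst hfeq
    -- `f = pm σ τ` is a minimal pseudo-monomial of `J_D`.
    have hmemD : ∀ c ∈ C, ¬ Compat (n - 1) σ τ c :=
      (pm_mem_projected_iff hC hd).mp hmem
    -- n is not in σ
    have hnσ : n ∉ σ := by
      intro hn
      have hdg : Disjoint (σ.erase n) τ :=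
        Finset.disjoint_of_subset_left (Finset.erase_subset n σ) hd
      have hgmem : pm (σ.erase n) τ ∈
          neuralIdeal (n - 1) {d | ∃ c ∈ C, d = c.erase n} := by
        refine (pm_mem_projected_iff hC hdg).mpr ?_
        intro c hc hcompat
        refine hmemD c hc ?_
        rwa [Compat, ← erase_inter σ] 
      have hfg : pm σ τ = X n * pm (σ.erase n) τ := pm_erase_left τ hn
      refine hmin ⟨pm (σ.erase n) τ, ⟨_, _, hdg, rfl⟩, hgmem, ?_, X n, hfg⟩
      rw [hfg]
      exact lt_totalDegree_X_mul _ (pm_ne_zero hdg) n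
    -- n is not in τ
    have hnτ : n ∉ τ := by
      intro hn
      have hdg : Disjoint σ (τ.erase n) :=
        Finset.disjoint_of_subset_right (Finset.erase_subset n τ) hd
      have hgmem : pm σ (τ.erase n) ∈
          neuralIdeal (n - 1) {d | ∃ c ∈ C, d = c.erase n} := by
        refine (pm_mem_projected_iff hC hdg).mpr ?_
        intro c hc hcompat
        refine hmemD c hc ?_
        rwa [Compat, ← erase_inter τ]
      have hfg : pm σ τ = (1 - X n) * pm σ (τ.erase n) := pm_erase_right σ hn
      refine hmin ⟨pm σ (τ.erase n), ⟨_, _, hdg, rfl⟩, hgmem, ?_, 1 - X n, hfg⟩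
      rw [hfg]
      exact lt_totalDegree_one_sub_X_mul _ (pm_ne_zero hdg) n
    refine ⟨⟨⟨σ, τ, hd, rfl⟩, ?_, ?_⟩, ?_, ?_⟩
    · -- membership in J_C
      refine (pm_mem_neuralIdeal_iff hC hd).mpr ?_
      intro c hc hcompat
      exact hmemD c hc ((compat_pred hnσ hnτ c).mp hcompat)
    · -- minimality in J_C
      rintro ⟨g, ⟨σ', τ', hd', hgeq⟩, hgJ, hdeg, h, hfh⟩
      change g = pm σ' τ' at hgeq
      subst hgeq
      have hgdvd : pm σ' τ' ∣ pm σ τ := ⟨h, by rw [hfh, mul_comm]⟩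
      have hσ' : n ∉ σ' := by
        intro hn
        exact hnσ (mem_of_X_dvd hd
          (dvd_trans ⟨pm (σ'.erase n) τ', pm_erase_left τ' hn⟩ hgdvd))
      have hτ' : n ∉ τ' := by
        intro hn
        exact hnτ (mem_of_one_sub_X_dvd hd
          (dvd_trans ⟨pm σ' (τ'.erase n), pm_erase_right σ' hn⟩ hgdvd))
      have hgD : pm σ' τ' ∈
          neuralIdeal (n - 1) {d | ∃ c ∈ C, d = c.erase n} := by
        refine (pm_mem_projected_iff hC hd').mpr ?_
        intro c hc hcompat
        exact (pm_mem_neuralIdeal_iff hC hd').mp hgJ c hc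
          ((compat_pred hσ' hτ' c).mpr hcompat)
      exact hmin ⟨pm σ' τ', ⟨σ', τ', hd', rfl⟩, hgD, hdeg, h, hfh⟩
    · -- not divisible by X n
      intro hdvd
      exact hnσ (mem_of_X_dvd hd hdvd)
    · -- not divisible by 1 - X n
      intro hdvd
      exact hnτ (mem_of_one_sub_X_dvd hd hdvd)
  · rintro ⟨⟨⟨σ, τ, hd, hfeq⟩, hmem, hmin⟩, hx, h1x⟩
    change f = pm σ τ at hfeq
    subst hfeq
    have hnσ : n ∉ σ := fun hn => hx ⟨pm (σ.erase n) τ, pm_erase_left τ hn⟩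
    have hnτ : n ∉ τ := fun hn => h1x ⟨pm σ (τ.erase n), pm_erase_right σ hn⟩
    have hmemC : ∀ c ∈ C, ¬ Compat n σ τ c :=
      (pm_mem_neuralIdeal_iff hC hd).mp hmem
    refine ⟨⟨σ, τ, hd, rfl⟩, ?_, ?_⟩
    · refine (pm_mem_projected_iff hC hd).mpr ?_
      intro c hc hcompat
      exact hmemC c hc ((compat_pred hnσ hnτ c).mpr hcompat)
    · rintro ⟨g, ⟨σ', τ', hd', hgeq⟩, hgD, hdeg, h, hfh⟩
      change g = pm σ' τ' at hgeq
      subst hgeq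
      have hgC : pm σ' τ' ∈ neuralIdeal n C := by
        refine (pm_mem_neuralIdeal_iff hC hd').mpr ?_
        intro c hc hcompat
        exact (pm_mem_projected_iff hC hd').mp hgD c hc (compat_mono hcompat)
      exact hmin ⟨pm σ' τ', ⟨σ', τ', hd', rfl⟩, hgC, hdeg, h, hfh⟩
end
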